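/- arXiv:1309.0019 — 2 statements merged into one kernel-verified Lean document; each statement's English description precedes it below -/
import Mathlib

section
/- Let R be a complete Noetherian local O-algebra with residue field F which is ϖ-torsion free, and let I be the kernel of the surjection R → R^red onto its maximal reduced quotient. Then R^red is ϖ-torsion free and the sequence 0 → I/ϖI → R/ϖ → R^red/ϖ → 0 is exact. -/
open IsLocalRing

/-!
If `π` is a non-zero-divisor then `(π r) ^ k = 0` forces `r ^ k = 0`, so `R ⧸ nilradical R` is
again `π`-torsion free. Reducing `0 → I → R → R ⧸ I → 0` modulo `π` is always right exact, and
it stays exact on the left as soon as `R ⧸ I` has no `π`-torsion: an element `π b` of `I` has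
`b ∈ I`, so it lies in `π I`.
-/

section

variable {R : Type*} [CommRing R] {π : R}

theorem mem_nilradical_of_mul_mem (hπ : π ∈ nonZeroDivisorsLeft R) {r : R}
    (h : π * r ∈ nilradical R) : r ∈ nilradical R :=
  ((Commute.all π r).isNilpotent_mul_left_iff hπ).mp h

theorem mk_mem_nonZeroDivisorsLeft_quotient_nilradical (hπ : π ∈ nonZeroDivisorsLeft R) :
    Ideal.Quotient.mk (nilradical R) π ∈ nonZeroDivisorsLeft (R ⧸ nilradical R) := by
  intro y hy
  obtain ⟨r, rfl⟩ := Ideal.Quotient.mk_surjective y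
  rw [← map_mul, Ideal.Quotient.eq_zero_iff_mem] at hy
  exact Ideal.Quotient.eq_zero_iff_mem.mpr (mem_nilradical_of_mul_mem hπ hy)

variable {I : Ideal R}

theorem injective_mapQ_subtype_span_singleton
    (hπ : Ideal.Quotient.mk I π ∈ nonZeroDivisorsLeft (R ⧸ I))
    (h : Ideal.span {π} • (⊤ : Submodule R I) ≤ Submodule.comap I.subtype (Ideal.span {π})) :
    Function.Injective (Submodule.mapQ _ _ I.subtype h) := by
  rw [← LinearMap.ker_eq_bot, Submodule.ker_mapQ, eq_bot_iff, Submodule.map_le_iff_le_comap,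
    Submodule.comap_bot, Submodule.ker_mkQ]
  rintro ⟨_, hπb⟩ hπb_span
  obtain ⟨b, rfl⟩ := Ideal.mem_span_singleton.mp hπb_span
  have hb : b ∈ I := by
    rw [← Ideal.Quotient.eq_zero_iff_mem] at hπb ⊢
    exact hπ _ (by rwa [← map_mul])
  rw [Submodule.mem_smul_top_iff]
  exact Submodule.smul_mem_smul (Ideal.mem_span_singleton_self π) hb

theorem span_singleton_le_comap_span_singleton_mk :
    Ideal.span {π} ≤ (Ideal.span {Ideal.Quotient.mk I π}).comap (Ideal.Quotient.mk I) :=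
  Ideal.span_le.mpr (Set.singleton_subset_iff.mpr (Ideal.mem_span_singleton_self _))

theorem ker_quotientMap_mk_span_singleton
    (h : Ideal.span {π} ≤ (Ideal.span {Ideal.Quotient.mk I π}).comap (Ideal.Quotient.mk I)) :
    RingHom.ker (Ideal.quotientMap _ _ h) = I.map (Ideal.Quotient.mk (Ideal.span {π})) := by
  -- `Ideal.ker_quotientMap_mk` is stated for the ideal `(span {π}).map (mk I)`, which equals
  -- `span {mk I π}` only propositionally; generalizing it lets us substitute.
  have ker_eq : ∀ (J : Ideal (R ⧸ I)) (hJ : J = (Ideal.span {π}).map (Ideal.Quotient.mk I))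
      (hle : Ideal.span {π} ≤ J.comap (Ideal.Quotient.mk I)),
      RingHom.ker (Ideal.quotientMap J _ hle) = I.map (Ideal.Quotient.mk (Ideal.span {π})) := by
    rintro _ rfl _
    exact Ideal.ker_quotientMap_mk
  exact ker_eq _ (by rw [Ideal.map_span, Set.image_singleton]) h

theorem exact_mapQ_subtype_quotientMap_mk
    (h : Ideal.span {π} • (⊤ : Submodule R I) ≤ Submodule.comap I.subtype (Ideal.span {π}))
    (h' : Ideal.span {π} ≤ (Ideal.span {Ideal.Quotient.mk I π}).comap (Ideal.Quotient.mk I)) :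
    Function.Exact (Submodule.mapQ _ _ I.subtype h) (Ideal.quotientMap _ _ h') := by
  intro y
  rw [← RingHom.mem_ker, ker_quotientMap_mk_span_singleton, ← LinearMap.coe_range,
    Submodule.range_mapQ, Submodule.range_subtype, SetLike.mem_coe, Ideal.map_eq_submodule_map]
  rfl

end

theorem nilradical_sequence_exact
    (O : Type*) [CommRing O] (ϖ : O)
    (R : Type*) [CommRing R] [Algebra O R]
    (htf : ∀ r : R, algebraMap O R ϖ * r = 0 → r = 0) :
    -- `R^red` is `ϖ`-torsion free:
    (∀ y : R ⧸ nilradical R, algebraMap O (R ⧸ nilradical R) ϖ * y = 0 → y = 0) ∧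
    -- the sequence `0 → I/ϖI → R/ϖ → R^red/ϖ → 0` is exact, where the two maps are the
    -- natural ones:
    (∀ (f : (↥(nilradical R) ⧸
            (Ideal.span {algebraMap O R ϖ} • (⊤ : Submodule R ↥(nilradical R)))) →ₗ[R]
          R ⧸ (Ideal.span {algebraMap O R ϖ})),
      f = Submodule.mapQ _ _ ((nilradical R).subtype)
        (by
          refine Submodule.smul_le.mpr ?_
          intro r hr n _
          simpa [smul_eq_mul] using Ideal.mul_mem_right (n : R) _ hr) →
      ∀ (g : (R ⧸ (Ideal.span {algebraMap O R ϖ})) →+*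
          ((R ⧸ nilradical R) ⧸
            (Ideal.span {algebraMap O (R ⧸ nilradical R) ϖ}))),
        g = Ideal.Quotient.lift (Ideal.span {algebraMap O R ϖ})
          ((Ideal.Quotient.mk
              (Ideal.span {algebraMap O (R ⧸ nilradical R) ϖ})).comp
            (Ideal.Quotient.mk (nilradical R)))
          (by
            intro a ha
            rw [Ideal.mem_span_singleton] at ha
            obtain ⟨b, rfl⟩ := ha
            rw [RingHom.comp_apply, map_mul, Ideal.Quotient.eq_zero_iff_mem]
            refine Ideal.mul_mem_right _ _ (Ideal.subset_span ?_)
            have h : algebraMap O (R ⧸ nilradical R) ϖ =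
                Ideal.Quotient.mk (nilradical R) (algebraMap O R ϖ) := by
              rw [IsScalarTower.algebraMap_apply O R (R ⧸ nilradical R),
                Ideal.Quotient.algebraMap_eq]
            exact Set.mem_singleton_iff.mpr h.symm) →
        Function.Injective f ∧ Function.Exact f g ∧ Function.Surjective g) := by
  have hred := mk_mem_nonZeroDivisorsLeft_quotient_nilradical htf
  refine ⟨hred, ?_⟩
  rintro f rfl g rfl
  have hle := span_singleton_le_comap_span_singleton_mk (I := nilradical R) (π := algebraMap O R ϖ)
  exact ⟨injective_mapQ_subtype_span_singleton hred _, exact_mapQ_subtype_quotientMap_mk _ hle,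
    Ideal.quotientMap_surjective (H := hle) Ideal.Quotient.mk_surjective⟩
end

section
/- Let G be a group, H ≤ G a subgroup, and ψ a character of H (a one-dimensional representation over a field). Suppose Z is a subgroup with H ⊆ Z ⊆ G and Z is the full stabilizer in G of the restriction ψ|_{H'} for some normal subgroup H' ⊆ H of G contained in H (meaning: for t ∈ G, ψ^t = ψ on H' implies t ∈ Z). If Z = H, then for each t ∈ G \ H, the characters ψ and ψ^t disagree on tHt^{-1} ∩ H, and consequently the induced representation Ind_H^G ψ is irreducible (when G is finite, by Mackey's criterion). -/
/-!
The normal core `N` of `H` acts diagonally on `Ind_H^G ψ`: `n ∈ N` multiplies the value of `f`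
at `g` by `ψ (g n g⁻¹)`. These characters of `N` separate `1` from every `t ∉ H`, since the
stabilizer of `ψ` on `H' ≤ N` is `H`. Hence linear combinations of the action of `N` cut a
nonzero vector of a subrepresentation, translated so that it does not vanish at `1`, down to a
nonzero multiple of `ψ` extended by zero off `H`. The translates of that vector by
representatives of the right cosets of `H` span everything.
-/

/-- The space of the representation of `G` induced from a character `ψ` of a subgroup `H`:
functions `f : G → F` with `f(hg) = ψ(h)f(g)` for `h ∈ H`. -/
def IndSubmodule (F : Type*) [Field F] {G : Type*} [Group G] (H : Subgroup G)
    (ψ : ↥H →* Fˣ) : Submodule F (G → F) where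
  carrier := {f | ∀ (h : ↥H) (g : G), f (↑h * g) = (ψ h : F) * f g}
  add_mem' := by
    intro a b ha hb h g
    simp only [Pi.add_apply, ha h g, hb h g]
    ring
  zero_mem' := by intro h g; simp
  smul_mem' := by
    intro c a ha h g
    simp only [Pi.smul_apply, ha h g, smul_eq_mul]
    ring

/-- The induced representation `Ind_H^G ψ` of `G`, acting by right translation on
`IndSubmodule F H ψ`. -/
noncomputable def indRep (F : Type*) [Field F] {G : Type*} [Group G] (H : Subgroup G)
    (ψ : ↥H →* Fˣ) : Representation F G ↥(IndSubmodule F H ψ) where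
  toFun x :=
    { toFun := fun f => ⟨fun g => f.1 (g * x), fun h g => by
        simpa [mul_assoc] using f.2 h (g * x)⟩
      map_add' := by intro a b; rfl
      map_smul' := by intro c a; rfl }
  map_one' := by ext f g; simp
  map_mul' := by intro x y; ext f g; simp [mul_assoc]

namespace IndSubmodule

variable {F : Type*} [Field F] {G : Type*} [Group G] {H : Subgroup G} {ψ : H →* Fˣ}

theorem apply_mul_of_mem (f : IndSubmodule F H ψ) {h : G} (hh : h ∈ H) (g : G) :
    (f : G → F) (h * g) = ψ ⟨h, hh⟩ * (f : G → F) g :=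
  f.2 ⟨h, hh⟩ g

variable (ψ) in
open Classical in
noncomputable def extendByZero : IndSubmodule F H ψ :=
  ⟨fun g => if hg : g ∈ H then (ψ ⟨g, hg⟩ : F) else 0, fun h g => by
    by_cases hg : g ∈ H
    · have hhg : ↑h * g ∈ H := H.mul_mem h.2 hg
      simp only [hg, hhg, dif_pos, ← Units.val_mul, ← map_mul]
      rfl
    · have hhg : ↑h * g ∉ H := fun hhg => hg (by simpa using H.mul_mem (H.inv_mem h.2) hhg)
      simp [hg, hhg]⟩

theorem extendByZero_apply_of_mem {g : G} (hg : g ∈ H) :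
    (extendByZero ψ : G → F) g = ψ ⟨g, hg⟩ := by
  simp [extendByZero, hg]

theorem extendByZero_apply_of_notMem {g : G} (hg : g ∉ H) :
    (extendByZero ψ : G → F) g = 0 := by
  simp [extendByZero, hg]

theorem extendByZero_ne_zero : extendByZero ψ ≠ 0 := fun h => by
  simpa [extendByZero_apply_of_mem H.one_mem] using congr_fun (congr_arg Subtype.val h) 1

theorem eq_smul_extendByZero {f : IndSubmodule F H ψ} (hf : ∀ g ∉ H, (f : G → F) g = 0) :
    f = (f : G → F) 1 • extendByZero ψ := by
  ext g
  by_cases hg : g ∈ H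
  · simpa [extendByZero_apply_of_mem hg, mul_comm] using apply_mul_of_mem f hg 1
  · simp [hf g hg, extendByZero_apply_of_notMem hg]

theorem sum_smul_indRep_extendByZero [Fintype (Quotient (QuotientGroup.rightRel H))]
    (f : IndSubmodule F H ψ) :
    ∑ q : Quotient (QuotientGroup.rightRel H),
      (f : G → F) q.out • indRep F H ψ q.out⁻¹ (extendByZero ψ) = f := by
  ext x
  rw [Submodule.coe_sum, Finset.sum_apply,
    Finset.sum_eq_single_of_mem (Quotient.mk _ x) (Finset.mem_univ _)]
  · set y := (Quotient.mk (QuotientGroup.rightRel H) x).out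
    have hx : x * y⁻¹ ∈ H := QuotientGroup.rightRel_apply.mp (Quotient.mk_out x)
    have hfx := apply_mul_of_mem f hx y
    rw [inv_mul_cancel_right] at hfx
    simp [indRep, extendByZero_apply_of_mem hx, hfx, mul_comm]
  · intro q _ hq
    have hx : x * q.out⁻¹ ∉ H := fun hx =>
      hq ((Quotient.out_eq q).symm.trans (Quotient.sound (QuotientGroup.rightRel_apply.mpr hx)))
    simp [indRep, extendByZero_apply_of_notMem hx]

variable (ψ) in
/-- With `ψᵗ h = ψ (t⁻¹ h t)`, this is `ψ^(t⁻¹)` restricted to `H.normalCore`. -/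
def conjCore (t : G) : H.normalCore →* Fˣ where
  toFun n := ψ ⟨t * n * t⁻¹, n.2 t⟩
  map_one' := by simp only [OneMemClass.coe_one, mul_one, mul_inv_cancel]; exact map_one ψ
  map_mul' n m := by
    rw [← map_mul]
    congr 1
    ext
    simp [mul_assoc]

theorem indRep_apply (x : G) (f : IndSubmodule F H ψ) (g : G) :
    (indRep F H ψ x f : G → F) g = (f : G → F) (g * x) :=
  rfl

theorem indRep_apply_of_normalCore (n : H.normalCore) (f : IndSubmodule F H ψ) (g : G) :
    (indRep F H ψ n f : G → F) g = conjCore ψ g n * (f : G → F) g := by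
  rw [indRep_apply, conjCore, MonoidHom.coe_mk, OneHom.coe_mk, ← apply_mul_of_mem f (n.2 g)]
  simp

theorem exists_mem_apply_eq_zero {W : Subrepresentation (indRep F H ψ)}
    {f : IndSubmodule F H ψ} (hf : f ∈ W) {t : G} {n : H.normalCore}
    (hn : conjCore ψ t n ≠ conjCore ψ 1 n) :
    ∃ f' ∈ W, (f' : G → F) 1 = (f : G → F) 1 ∧ (f' : G → F) t = 0 ∧
      ∀ g, (f : G → F) g = 0 → (f' : G → F) g = 0 := by
  set a : F := (conjCore ψ 1 n : F)
  set b : F := (conjCore ψ t n : F)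
  have hab : a - b ≠ 0 := sub_ne_zero.mpr (Units.val_injective.ne hn.symm)
  set f' : IndSubmodule F H ψ := (a - b)⁻¹ • (indRep F H ψ n f - b • f)
  have hf' : ∀ g, (f' : G → F) g = (a - b)⁻¹ * (conjCore ψ g n - b) * (f : G → F) g := by
    intro g
    simp only [f', Submodule.coe_smul, Submodule.coe_sub, Pi.smul_apply, Pi.sub_apply,
      indRep_apply_of_normalCore, smul_eq_mul]
    ring
  refine ⟨f', W.toSubmodule.smul_mem _ (W.toSubmodule.sub_mem (W.apply_mem_toSubmodule n hf)
    (W.toSubmodule.smul_mem _ hf)), ?_, ?_, ?_⟩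
  · rw [hf', inv_mul_cancel₀ hab, one_mul]
  · rw [hf']; simp [b]
  · intro g hg; rw [hf', hg, mul_zero]

theorem smul_extendByZero_mem [Finite G] (hsep : ∀ t ∉ H, conjCore ψ t ≠ conjCore ψ 1)
    {W : Subrepresentation (indRep F H ψ)} {f : IndSubmodule F H ψ} (hf : f ∈ W) :
    (f : G → F) 1 • extendByZero ψ ∈ W := by
  have := Fintype.ofFinite G
  suffices h : ∀ S : Finset G, ∃ f' ∈ W, (f' : G → F) 1 = (f : G → F) 1 ∧
      ∀ t ∈ S, t ∉ H → (f' : G → F) t = 0 by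
    obtain ⟨f', hf'W, hf'1, hf'0⟩ := h Finset.univ
    rwa [← hf'1, ← eq_smul_extendByZero fun t ht => hf'0 t (Finset.mem_univ t) ht]
  intro S
  classical
  induction S using Finset.induction_on with
  | empty => exact ⟨f, hf, rfl, by simp⟩
  | insert t S _ ih =>
    obtain ⟨f₁, hf₁W, hf₁1, hf₁0⟩ := ih
    by_cases ht : t ∈ H
    · refine ⟨f₁, hf₁W, hf₁1, ?_⟩
      intro s hs hsH
      rcases Finset.mem_insert.mp hs with rfl | hs
      exacts [absurd ht hsH, hf₁0 s hs hsH]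
    obtain ⟨n, hn⟩ := DFunLike.ne_iff.mp (hsep t ht)
    obtain ⟨f₂, hf₂W, hf₂1, hf₂t, hf₂0⟩ := exists_mem_apply_eq_zero hf₁W hn
    refine ⟨f₂, hf₂W, hf₂1.trans hf₁1, ?_⟩
    intro s hs hsH
    rcases Finset.mem_insert.mp hs with rfl | hs
    exacts [hf₂t, hf₂0 s (hf₁0 s hs hsH)]

theorem eq_top_of_extendByZero_mem [Finite (Quotient (QuotientGroup.rightRel H))]
    {W : Subrepresentation (indRep F H ψ)} (he : extendByZero ψ ∈ W) : W = ⊤ := by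
  have := Fintype.ofFinite (Quotient (QuotientGroup.rightRel H))
  refine Subrepresentation.toSubmodule_injective (Submodule.eq_top_iff'.mpr fun f => ?_)
  rw [← sum_smul_indRep_extendByZero f]
  exact W.toSubmodule.sum_mem fun q _ =>
    W.toSubmodule.smul_mem _ (W.apply_mem_toSubmodule _ he)

theorem isIrreducible_indRep [Finite G] (hsep : ∀ t ∉ H, conjCore ψ t ≠ conjCore ψ 1) :
    (indRep F H ψ).IsIrreducible where
  exists_pair_ne := ⟨⊥, ⊤, fun h => extendByZero_ne_zero
    (show extendByZero ψ ∈ (⊥ : Subrepresentation (indRep F H ψ)) from h ▸ trivial)⟩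
  eq_bot_or_eq_top W := by
    refine or_iff_not_imp_left.mpr fun hW => ?_
    obtain ⟨f, hfW, hf⟩ := W.toSubmodule.ne_bot_iff.mp fun h =>
      hW (Subrepresentation.toSubmodule_injective h)
    obtain ⟨g, hg⟩ : ∃ g, (f : G → F) g ≠ 0 := by
      by_contra! h
      exact hf (Subtype.ext (funext h))
    have hfg := smul_extendByZero_mem hsep (W.apply_mem_toSubmodule g hfW)
    rw [indRep_apply, one_mul] at hfg
    have he : extendByZero ψ ∈ W.toSubmodule := by
      simpa [hg] using W.toSubmodule.smul_mem ((f : G → F) g)⁻¹ hfg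
    exact eq_top_of_extendByZero_mem he

end IndSubmodule

theorem induced_character_irreducible_of_stabilizer_eq_general
    (F : Type*) [Field F] {G : Type*} [Group G] [Finite G]
    (H' Z H : Subgroup G) (ψ : ↥H →* Fˣ)
    (hH'H : H' ≤ H) (hn : H'.Normal)
    (hstab : ∀ t : G,
      (∀ (x : G) (hx : x ∈ H'), ψ ⟨t * x * t⁻¹, hH'H (hn.conj_mem x hx t)⟩ = ψ ⟨x, hH'H hx⟩) →
      t ∈ Z)
    (hZ : Z = H) :
    (∀ t : G, t ∉ H →
      ∃ (x : G) (hx : x ∈ H) (hx' : t⁻¹ * x * t ∈ H),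
        ψ ⟨x, hx⟩ ≠ ψ ⟨t⁻¹ * x * t, hx'⟩) ∧
    IsSimpleModule (MonoidAlgebra F G) (indRep F H ψ).asModule := by
  have hsep : ∀ t ∉ H, IndSubmodule.conjCore ψ t ≠ IndSubmodule.conjCore ψ 1 := by
    intro t ht hψt
    refine ht (hZ ▸ hstab t fun x hx => ?_)
    have hx' : x ∈ H.normalCore := fun g => hH'H (hn.conj_mem x hx g)
    simpa [IndSubmodule.conjCore] using DFunLike.congr_fun hψt ⟨x, hx'⟩
  refine ⟨fun t ht => ?_, (indRep F H ψ).irreducible_iff_isSimpleModule_asModule.mp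
    (IndSubmodule.isIrreducible_indRep hsep)⟩
  obtain ⟨n, hψn⟩ := DFunLike.ne_iff.mp (hsep t ht)
  have hn' : t⁻¹ * (t * n * t⁻¹) * t ∈ H := by simpa [mul_assoc] using H.normalCore_le n.2
  refine ⟨t * n * t⁻¹, n.2 t, hn', fun h => hψn ?_⟩
  simpa [IndSubmodule.conjCore, mul_assoc] using h

/-- Let `G` be a group, `H ≤ G` and `ψ` a character of `H` over a field
`F`.  Suppose `H' ⊆ H` is a normal subgroup of `G`, and `Z` (with `H ⊆ Z ⊆ G`) is the full
stabilizer of `ψ|_{H'}`, in the sense that any `t` with `ψᵗ = ψ` on `H'` lies in `Z`.  If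
`Z = H`, then for each `t ∈ G \ H` the characters `ψ` and `ψᵗ` disagree on `tHt⁻¹ ∩ H`, and
consequently (for `G` finite, by Mackey's criterion) the induced representation `Ind_H^G ψ`
is irreducible. -/
theorem induced_character_irreducible_of_stabilizer_eq
    (F : Type*) [Field F] {G : Type*} [Group G] [Finite G]
    (H' Z H : Subgroup G) (ψ : ↥H →* Fˣ)
    (hH'H : H' ≤ H) (hHZ : H ≤ Z) (hn : H'.Normal)
    (hstab : ∀ t : G,
      (∀ (x : G) (hx : x ∈ H'), ψ ⟨t * x * t⁻¹, hH'H (hn.conj_mem x hx t)⟩ = ψ ⟨x, hH'H hx⟩) →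
      t ∈ Z)
    (hZ : Z = H) :
    (∀ t : G, t ∉ H →
      ∃ (x : G) (hx : x ∈ H) (hx' : t⁻¹ * x * t ∈ H),
        ψ ⟨x, hx⟩ ≠ ψ ⟨t⁻¹ * x * t, hx'⟩) ∧
    IsSimpleModule (MonoidAlgebra F G) (indRep F H ψ).asModule :=
  induced_character_irreducible_of_stabilizer_eq_general F H' Z H ψ hH'H hn hstab hZ
end
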